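/- arXiv:2603.26850 — 2 statements merged into one kernel-verified Lean document; each statement's English description precedes it below -/
import Mathlib

section
/- Let H ∈ ℝ^{n×K} have full rank K and let α ≥ 0. Then |||P_{[H]_α} − P_{[H]}|||² ≤ α / ρ_min(HᵀH), where P_{[H]} = H(HᵀH)⁻¹Hᵀ and P_{[H]_α} = H(HᵀH + αI_K)⁻¹Hᵀ. -/
open MeasureTheory ProbabilityTheory Matrix

/-- Orthogonal projection onto the column span of `M` (for `M` of full column rank). -/
noncomputable def projMat {n K : ℕ} (M : Matrix (Fin n) (Fin K) ℝ) :
    Matrix (Fin n) (Fin n) ℝ :=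
  M * (Mᵀ * M)⁻¹ * Mᵀ

/-- Ridge-regularized projection operator with parameter `α`. -/
noncomputable def projMatReg {n K : ℕ} (M : Matrix (Fin n) (Fin K) ℝ) (α : ℝ) :
    Matrix (Fin n) (Fin n) ℝ :=
  M * (Mᵀ * M + α • (1 : Matrix (Fin K) (Fin K) ℝ))⁻¹ * Mᵀ

/-- `ℓ²`-operator (spectral) norm of a square real matrix. -/
noncomputable def opNorm {n : ℕ} (M : Matrix (Fin n) (Fin n) ℝ) : ℝ :=
  ‖LinearMap.toContinuousLinearMap (Matrix.toEuclideanLin M)‖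

/-- Largest real eigenvalue of a square matrix (`ρ`). -/
noncomputable def rhoMax {K : ℕ} (A : Matrix (Fin K) (Fin K) ℝ) : ℝ :=
  sSup (spectrum ℝ A)

/-- Smallest real eigenvalue of a square matrix (`ρ_min`). -/
noncomputable def rhoMin {K : ℕ} (A : Matrix (Fin K) (Fin K) ℝ) : ℝ :=
  sInf (spectrum ℝ A)

/-- Condition number `Cond(A) = ρ(A)/ρ_min(A)`. -/
noncomputable def condNum {K : ℕ} (A : Matrix (Fin K) (Fin K) ℝ) : ℝ :=
  rhoMax A / rhoMin A

/-- For a symmetric matrix `M`, `ρ(M) = sup_{‖x‖ = 1} |xᵀ M x|`. -/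
noncomputable def rhoAbs {K : ℕ} (M : Matrix (Fin K) (Fin K) ℝ) : ℝ :=
  sSup {r | ∃ x : Fin K → ℝ, x ⬝ᵥ x = 1 ∧ r = |x ⬝ᵥ (M *ᵥ x)|}

/-- The family `Z i`, `i : ι`, consists of i.i.d. standard gaussian random variables. -/
def IsStdGaussianFamily {Ω : Type} [MeasureSpace Ω] {ι : Type} [Fintype ι]
    (Z : Ω → ι → ℝ) : Prop :=
  (∀ i, Measurable fun ω => Z ω i) ∧
  iIndepFun (fun i ω => Z ω i) ℙ ∧
  ∀ i, Measure.map (fun ω => Z ω i) ℙ = gaussianReal 0 1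

/-!
Diagonalise `HᵀH = U diag(μ) Uᵀ` with `U` orthogonal. The columns of `W = HU` are orthogonal
with `WᵀW = diag(μ)`, and for every `α ≥ 0` the ridge projection is `W diag(1/(μ + α)) Wᵀ`.
Hence `P_{[H]_α} - P_{[H]} = V diag(-α/(μ + α)) Vᵀ` for the isometry `V = W diag(μ)^{-1/2}`,
whose spectral norm is at most `maxᵢ α/(μᵢ + α)`. Finally `(α/(μ + α))² ≤ α/ρ_min` because
`α ρ_min ≤ (μ + α)²`.
-/

open scoped Matrix.Norms.L2Operator

lemma abs_mul_inv_add_sub_inv_le_sqrt {a r x : ℝ} (ha : 0 ≤ a) (hr : 0 < r) (hrx : r ≤ x) :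
    |x * ((x + a)⁻¹ - x⁻¹)| ≤ √(a / r) := by
  have hx : 0 < x := hr.trans_le hrx
  have h : x * ((x + a)⁻¹ - x⁻¹) = -(a / (x + a)) := by
    field_simp
    ring
  rw [h, abs_neg, abs_of_nonneg (by positivity)]
  refine Real.le_sqrt_of_sq_le ?_
  rw [div_pow, div_le_div_iff₀ (by positivity) hr]
  have hax : a * r ≤ (x + a) ^ 2 := by nlinarith
  nlinarith [mul_le_mul_of_nonneg_left hax ha]

namespace Matrix

section L2OpNorm

variable {m k 𝕜 : Type*} [RCLike 𝕜] [Fintype m] [Fintype k] [DecidableEq k]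

lemma l2_opNorm_le_one_of_conjTranspose_mul_self_eq_one {V : Matrix m k 𝕜} (hV : Vᴴ * V = 1) :
    ‖V‖ ≤ 1 := by
  have hsq : ‖V‖ * ‖V‖ ≤ 1 := by
    rw [← l2_opNorm_conjTranspose_mul_self, hV, ← diagonal_one, l2_opNorm_diagonal]
    exact (pi_norm_le_iff_of_nonneg zero_le_one).mpr fun _ => norm_one.le
  nlinarith [norm_nonneg V]

lemma l2_opNorm_mul_diagonal_mul_conjTranspose_le [DecidableEq m] {V : Matrix m k 𝕜}
    (hV : Vᴴ * V = 1) (e : k → 𝕜) : ‖V * diagonal e * Vᴴ‖ ≤ ‖e‖ := by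
  have hV1 := l2_opNorm_le_one_of_conjTranspose_mul_self_eq_one hV
  calc ‖V * diagonal e * Vᴴ‖ ≤ ‖V‖ * ‖diagonal e‖ * ‖Vᴴ‖ :=
        (l2_opNorm_mul _ _).trans (by gcongr; exact l2_opNorm_mul _ _)
    _ ≤ 1 * ‖e‖ * 1 := by
        rw [l2_opNorm_diagonal, l2_opNorm_conjTranspose]
        gcongr
    _ = ‖e‖ := by ring

end L2OpNorm

section Field

variable {k R : Type*} [Fintype k] [DecidableEq k] [Field R]

lemma isUnit_of_rank_eq_card {A : Matrix k k R} (h : A.rank = Fintype.card k) : IsUnit A := by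
  refine mulVec_surjective_iff_isUnit.mp ((LinearMap.range_eq_top (f := A.mulVecLin)).mp ?_)
  exact Submodule.eq_top_of_finrank_eq (by rw [← rank, h, Module.finrank_fintype_fun_eq_card])

lemma inv_diagonal_of_ne_zero {d : k → R} (hd : ∀ i, d i ≠ 0) :
    (diagonal d)⁻¹ = diagonal d⁻¹ := by
  refine inv_eq_left_inv ?_
  rw [diagonal_mul_diagonal, ← diagonal_one]
  exact congrArg diagonal (funext fun i => inv_mul_cancel₀ (hd i))

variable {U : Matrix k k R} (hU : U * Uᵀ = 1)
include hU

lemma inv_mul_mul_transpose_of_mul_transpose_eq_one (hU' : Uᵀ * U = 1) (A : Matrix k k R) :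
    (U * A * Uᵀ)⁻¹ = U * A⁻¹ * Uᵀ := by
  rw [mul_inv_rev, mul_inv_rev, inv_eq_left_inv hU, inv_eq_left_inv hU', Matrix.mul_assoc]

lemma mul_diagonal_mul_transpose_add_smul_one (μ : k → R) (α : R) :
    U * diagonal μ * Uᵀ + α • 1 = U * diagonal (fun i => μ i + α) * Uᵀ := by
  rw [← diagonal_add, Matrix.mul_add, Matrix.add_mul, ← smul_one_eq_diagonal, Matrix.mul_smul,
    Matrix.mul_one, Matrix.smul_mul, hU]

end Field

section Real

variable {m k : Type*} [Fintype m] [Fintype k] [DecidableEq k]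

lemma l2_opNorm_mul_diagonal_mul_transpose_le [DecidableEq m] {W : Matrix m k ℝ} {μ : k → ℝ}
    (hμ : ∀ i, 0 < μ i) (hW : Wᵀ * W = diagonal μ) (d : k → ℝ) :
    ‖W * diagonal d * Wᵀ‖ ≤ ‖μ * d‖ := by
  set s : k → ℝ := fun i => √(μ i)
  have hs : ∀ i, s i * s i = μ i := fun i => Real.mul_self_sqrt (hμ i).le
  have hs0 : ∀ i, s i ≠ 0 := fun i => (Real.sqrt_pos.mpr (hμ i)).ne'
  set V := W * diagonal s⁻¹
  have hV : Vᴴ * V = 1 := by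
    rw [conjTranspose_eq_transpose_of_trivial, transpose_mul, diagonal_transpose,
      Matrix.mul_assoc, ← Matrix.mul_assoc Wᵀ, hW, diagonal_mul_diagonal, diagonal_mul_diagonal,
      ← diagonal_one]
    congr 1
    funext i
    simp only [Pi.inv_apply, ← hs i]
    field_simp [hs0 i]
  have hWV : W = V * diagonal s := by
    rw [Matrix.mul_assoc, diagonal_mul_diagonal]
    conv_lhs => rw [← Matrix.mul_one W, ← diagonal_one]
    congr 2
    funext i
    simp [hs0 i]
  have hconj : W * diagonal d * Wᵀ = V * diagonal (μ * d) * Vᴴ := by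
    rw [conjTranspose_eq_transpose_of_trivial]
    conv_lhs => rw [hWV]
    rw [transpose_mul, diagonal_transpose,
      show V * diagonal s * diagonal d * (diagonal s * Vᵀ)
        = V * (diagonal s * diagonal d * diagonal s) * Vᵀ by simp only [Matrix.mul_assoc],
      diagonal_mul_diagonal, diagonal_mul_diagonal]
    congr 3
    funext i
    rw [Pi.mul_apply, ← hs i]
    ring
  rw [hconj]
  exact l2_opNorm_mul_diagonal_mul_conjTranspose_le hV _

lemma posDef_transpose_mul_self_of_rank_eq_card {H : Matrix m k ℝ}
    (hH : H.rank = Fintype.card k) : (Hᵀ * H).PosDef := by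
  have hpsd := posSemidef_conjTranspose_mul_self H
  rw [conjTranspose_eq_transpose_of_trivial] at hpsd
  exact hpsd.posDef_iff_isUnit.mpr <|
    isUnit_of_rank_eq_card (by rw [rank_transpose_mul_self, hH])

lemma IsHermitian.exists_orthogonal_eq_mul_diagonal_mul_transpose {A : Matrix k k ℝ}
    (hA : A.IsHermitian) :
    ∃ U : Matrix k k ℝ, U * Uᵀ = 1 ∧ Uᵀ * U = 1 ∧ A = U * diagonal hA.eigenvalues * Uᵀ := by
  have hU := mem_unitaryGroup_iff.mp hA.eigenvectorUnitary.2
  have hU' := mem_unitaryGroup_iff'.mp hA.eigenvectorUnitary.2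
  have hspec := hA.spectral_theorem
  simp only [star_eq_conjTranspose, conjTranspose_eq_transpose_of_trivial,
    Unitary.conjStarAlgAut_apply, RCLike.ofReal_real_eq_id, Function.id_comp] at hU hU' hspec
  exact ⟨_, hU, hU', hspec⟩

variable {H : Matrix m k ℝ} {U : Matrix k k ℝ} {μ : k → ℝ}

lemma transpose_mul_self_mul_eq_diagonal (hU' : Uᵀ * U = 1)
    (hH : Hᵀ * H = U * diagonal μ * Uᵀ) : (H * U)ᵀ * (H * U) = diagonal μ := by
  rw [transpose_mul, Matrix.mul_assoc, ← Matrix.mul_assoc Hᵀ, hH]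
  simp only [Matrix.mul_assoc, hU', Matrix.mul_one]
  rw [← Matrix.mul_assoc, hU', Matrix.one_mul]

end Real

section RhoMin

variable {K : ℕ} {A : Matrix (Fin K) (Fin K) ℝ}

lemma IsHermitian.rhoMin_le_eigenvalues (hA : A.IsHermitian) (i : Fin K) :
    rhoMin A ≤ hA.eigenvalues i := by
  rw [rhoMin, hA.spectrum_real_eq_range_eigenvalues]
  exact csInf_le (Set.finite_range _).bddBelow ⟨i, rfl⟩

lemma PosDef.rhoMin_pos [Nonempty (Fin K)] (hA : A.PosDef) : 0 < rhoMin A := by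
  obtain ⟨i, hi⟩ : rhoMin A ∈ Set.range hA.isHermitian.eigenvalues := by
    rw [rhoMin, hA.isHermitian.spectrum_real_eq_range_eigenvalues]
    exact (Set.range_nonempty _).csInf_mem (Set.finite_range _)
  exact hi ▸ hA.eigenvalues_pos i

lemma PosSemidef.rhoMin_nonneg (hA : A.PosSemidef) : 0 ≤ rhoMin A := by
  refine Real.sInf_nonneg fun x hx => ?_
  rw [hA.isHermitian.spectrum_real_eq_range_eigenvalues] at hx
  obtain ⟨i, rfl⟩ := hx
  exact hA.eigenvalues_nonneg i

end RhoMin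

end Matrix

lemma projMatReg_zero {n K : ℕ} (M : Matrix (Fin n) (Fin K) ℝ) : projMatReg M 0 = projMat M := by
  simp [projMatReg, projMat]


lemma projMatReg_eq_of_transpose_mul_self_eq {n K : ℕ} {H : Matrix (Fin n) (Fin K) ℝ}
    {U : Matrix (Fin K) (Fin K) ℝ} {μ : Fin K → ℝ} (hU : U * Uᵀ = 1) (hU' : Uᵀ * U = 1)
    (hH : Hᵀ * H = U * diagonal μ * Uᵀ) {α : ℝ} (hα : ∀ i, μ i + α ≠ 0) :
    projMatReg H α = H * U * diagonal (fun i => (μ i + α)⁻¹) * (H * U)ᵀ := by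
  rw [projMatReg, hH, mul_diagonal_mul_transpose_add_smul_one hU,
    inv_mul_mul_transpose_of_mul_transpose_eq_one hU hU', inv_diagonal_of_ne_zero hα,
    transpose_mul]
  simp only [Matrix.mul_assoc, Pi.inv_def]

/-- Bias induced by the Ridge regularization of the projection operator. -/
theorem regularization_bias_bound (n K : ℕ) (H : Matrix (Fin n) (Fin K) ℝ)
    (hH : H.rank = K) (α : ℝ) (hα : 0 ≤ α) :
    (opNorm (projMatReg H α - projMat H))^2 ≤ α / rhoMin (Hᵀ * H) := by
  have hA : (Hᵀ * H).PosDef :=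
    posDef_transpose_mul_self_of_rank_eq_card (by rw [hH, Fintype.card_fin])
  obtain ⟨U, hU, hU', hspec⟩ := hA.isHermitian.exists_orthogonal_eq_mul_diagonal_mul_transpose
  set μ := hA.isHermitian.eigenvalues
  set ρ := rhoMin (Hᵀ * H)
  have hD : projMatReg H α - projMat H =
      H * U * diagonal (fun i => (μ i + α)⁻¹ - (μ i)⁻¹) * (H * U)ᵀ := by
    rw [← projMatReg_zero,
      projMatReg_eq_of_transpose_mul_self_eq hU hU' hspec fun i =>
        (add_pos_of_pos_of_nonneg (hA.eigenvalues_pos i) hα).ne',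
      projMatReg_eq_of_transpose_mul_self_eq hU hU' hspec fun i => by
        simpa using (hA.eigenvalues_pos i).ne',
      ← Matrix.sub_mul, ← Matrix.mul_sub, diagonal_sub]
    simp only [add_zero]
  have hcoef : ‖μ * fun i => (μ i + α)⁻¹ - (μ i)⁻¹‖ ≤ √(α / ρ) :=
    (pi_norm_le_iff_of_nonneg (Real.sqrt_nonneg _)).mpr fun i => by
      have : Nonempty (Fin K) := ⟨i⟩
      exact abs_mul_inv_add_sub_inv_le_sqrt hα hA.rhoMin_pos
        (hA.isHermitian.rhoMin_le_eigenvalues i)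
  -- `opNorm` is definitionally the norm of `Matrix.Norms.L2Operator`.
  have hnorm : opNorm (projMatReg H α - projMat H) ≤ √(α / ρ) := by
    rw [hD]
    exact (l2_opNorm_mul_diagonal_mul_transpose_le hA.eigenvalues_pos
      (transpose_mul_self_mul_eq_diagonal hU' hspec) _).trans hcoef
  exact (Real.le_sqrt (norm_nonneg _) (div_nonneg hα hA.posSemidef.rhoMin_nonneg)).mp hnorm
end

section
/- Let H, E ∈ ℝ^{n×K} with H of full rank K, set Ĥ = H + E, and let α > 0 satisfy Σ_{j=1}^{K} ‖E_{·,j}‖² ≤ α/2, where E_{·,j} denotes the j-th column of E. For a unit vector u ∈ ℝⁿ define Λ_{u,α} = (HᵀH + αI_K)⁻¹Hᵀu and the quantities I_α = ‖E·Λ_{u,α}‖², II_α = ‖(ĤᵀĤ − HᵀH)·Λ_{u,α}‖², III_α = (Hᵀu − Ĥᵀu)ᵀ(HᵀH + αI_K)⁻¹(Hᵀu − Ĥᵀu). Then ‖P_{[H]_α}(u) − P_{[Ĥ]_α}(u)‖² ≤ 16·I_α + (8 + 64·Cond(HᵀH))·ρ_min(ĤᵀĤ + αI_K)⁻¹·II_α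 + (9 + 256·Cond(HᵀH) + 128·Cond(HᵀH)³)·III_α. -/
/-!
Write `R = HᵀH + αI`, `R̂ = ĤᵀĤ + αI` and `Λ = R⁻¹Hᵀu`. Since `RΛ = Hᵀu`, the error splits as
`P_{[H]_α}u - P_{[Ĥ]_α}u = -EΛ + ĤR̂⁻¹(ĤᵀĤ - HᵀH)Λ + ĤR̂⁻¹(Hᵀu - Ĥᵀu)`,
and `‖ĤR̂⁻¹w‖² ≤ wᵀR̂⁻¹w ≤ ρ_min(R̂)⁻¹‖w‖²` for every `w`. From `‖(H + E)x‖² ≥ ‖Hx‖²/2 - ‖Ex‖²`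
and `‖Ex‖² ≤ (α/2)‖x‖²` one gets `ρ_min(R̂) ≥ (ρ_min(HᵀH) + α)/2`, hence
`wᵀR̂⁻¹w ≤ ρ(R)/ρ_min(R̂) · wᵀR⁻¹w ≤ 2 Cond(HᵀH) · wᵀR⁻¹w`. Together with
`‖a + b + c‖² ≤ 3(‖a‖² + ‖b‖² + ‖c‖²)` this gives the bound even with the constants `3`, `3` and
`6 Cond(HᵀH)`.
-/

open MeasureTheory ProbabilityTheory Matrix

open scoped MatrixOrder

theorem add_div_add_le_div {a b c : ℝ} (hb : 0 < b) (hba : b ≤ a) (hc : 0 ≤ c) :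
    (a + c) / (b + c) ≤ a / b := by
  rw [div_le_div_iff₀ (by positivity) hb]
  nlinarith

namespace Matrix

section DotProduct

variable {m : Type*} [Fintype m]

theorem dotProduct_self_nonneg {R : Type*} [Ring R] [LinearOrder R] [IsStrictOrderedRing R]
    (v : m → R) : 0 ≤ v ⬝ᵥ v :=
  Finset.sum_nonneg fun i _ => mul_self_nonneg (v i)

theorem half_dotProduct_self_sub_le (a b : m → ℝ) :
    a ⬝ᵥ a / 2 - b ⬝ᵥ b ≤ (a + b) ⬝ᵥ (a + b) := by
  simp only [dotProduct, Pi.add_apply, Finset.sum_div, ← Finset.sum_sub_distrib]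
  exact Finset.sum_le_sum fun i _ => by nlinarith [sq_nonneg (a i + 2 * b i)]

theorem dotProduct_self_add_add_le (a b c : m → ℝ) :
    (a + b + c) ⬝ᵥ (a + b + c) ≤ 3 * (a ⬝ᵥ a + b ⬝ᵥ b + c ⬝ᵥ c) := by
  simp only [dotProduct, Pi.add_apply, ← Finset.sum_add_distrib, Finset.mul_sum]
  exact Finset.sum_le_sum fun i _ => by
    nlinarith [sq_nonneg (a i - b i), sq_nonneg (b i - c i), sq_nonneg (a i - c i)]

theorem dotProduct_self_mulVec_le {ι : Type*} [Fintype ι] (E : Matrix m ι ℝ) (x : ι → ℝ) :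
    E *ᵥ x ⬝ᵥ E *ᵥ x ≤ (∑ j, ∑ i, E i j ^ 2) * (x ⬝ᵥ x) := by
  rw [Finset.sum_comm, Finset.sum_mul]
  refine Finset.sum_le_sum fun i _ => ?_
  simpa [← sq, mulVec, dotProduct] using Finset.sum_mul_sq_le_sq_mul_sq Finset.univ (E i) x

end DotProduct

section Spectrum

variable {ι : Type*} [Fintype ι] [DecidableEq ι] {A B : Matrix ι ι ℝ}

theorem IsHermitian.forall_le_dotProduct_mulVec_iff (hA : A.IsHermitian) (c : ℝ) :
    (∀ x, c * (x ⬝ᵥ x) ≤ x ⬝ᵥ A *ᵥ x) ↔ ∀ μ ∈ spectrum ℝ A, c ≤ μ := by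
  have hsub : (A - c • 1).IsHermitian := hA.sub (isHermitian_one.smul (IsSelfAdjoint.all c))
  rw [← algebraMap_le_iff_le_spectrum (ha := hA), le_iff, Algebra.algebraMap_eq_smul_one,
    posSemidef_iff_dotProduct_mulVec]
  simp only [hsub, true_and, star_trivial, sub_mulVec, smul_mulVec, one_mulVec, dotProduct_sub,
    dotProduct_smul, smul_eq_mul, sub_nonneg]

theorem IsHermitian.forall_dotProduct_mulVec_le_iff (hA : A.IsHermitian) (c : ℝ) :
    (∀ x, x ⬝ᵥ A *ᵥ x ≤ c * (x ⬝ᵥ x)) ↔ ∀ μ ∈ spectrum ℝ A, μ ≤ c := by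
  have hsub : (c • 1 - A).IsHermitian := (isHermitian_one.smul (IsSelfAdjoint.all c)).sub hA
  rw [← le_algebraMap_iff_spectrum_le (ha := hA), le_iff, Algebra.algebraMap_eq_smul_one,
    posSemidef_iff_dotProduct_mulVec]
  simp only [hsub, true_and, star_trivial, sub_mulVec, smul_mulVec, one_mulVec, dotProduct_sub,
    dotProduct_smul, smul_eq_mul, sub_nonneg]

theorem IsHermitian.sInf_spectrum_mul_le (hA : A.IsHermitian) (x : ι → ℝ) :
    sInf (spectrum ℝ A) * (x ⬝ᵥ x) ≤ x ⬝ᵥ A *ᵥ x :=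
  (hA.forall_le_dotProduct_mulVec_iff _).2
    (fun _ hμ => csInf_le finite_real_spectrum.bddBelow hμ) x

theorem IsHermitian.dotProduct_mulVec_le_sSup_spectrum_mul (hA : A.IsHermitian) (x : ι → ℝ) :
    x ⬝ᵥ A *ᵥ x ≤ sSup (spectrum ℝ A) * (x ⬝ᵥ x) :=
  (hA.forall_dotProduct_mulVec_le_iff _).2
    (fun _ hμ => le_csSup finite_real_spectrum.bddAbove hμ) x

theorem IsHermitian.spectrum_real_nonempty [Nonempty ι] (hA : A.IsHermitian) :
    (spectrum ℝ A).Nonempty :=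
  hA.spectrum_real_eq_range_eigenvalues ▸ Set.range_nonempty _

theorem IsHermitian.le_sInf_spectrum [Nonempty ι] (hA : A.IsHermitian) {c : ℝ}
    (h : ∀ x, c * (x ⬝ᵥ x) ≤ x ⬝ᵥ A *ᵥ x) : c ≤ sInf (spectrum ℝ A) :=
  le_csInf hA.spectrum_real_nonempty ((hA.forall_le_dotProduct_mulVec_iff c).1 h)

theorem IsHermitian.sSup_spectrum_le [Nonempty ι] (hA : A.IsHermitian) {c : ℝ}
    (h : ∀ x, x ⬝ᵥ A *ᵥ x ≤ c * (x ⬝ᵥ x)) : sSup (spectrum ℝ A) ≤ c :=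
  csSup_le hA.spectrum_real_nonempty ((hA.forall_dotProduct_mulVec_le_iff c).1 h)

theorem IsHermitian.sSup_spectrum_add_smul_one_le [Nonempty ι] (hA : A.IsHermitian) (α : ℝ) :
    sSup (spectrum ℝ (A + α • 1)) ≤ sSup (spectrum ℝ A) + α := by
  refine (hA.add (isHermitian_one.smul (IsSelfAdjoint.all α))).sSup_spectrum_le fun x => ?_
  have := hA.dotProduct_mulVec_le_sSup_spectrum_mul x
  rw [add_mulVec, smul_mulVec, one_mulVec, dotProduct_add, dotProduct_smul, smul_eq_mul]
  linarith

theorem PosDef.pos_of_mem_spectrum (hA : A.PosDef) {μ : ℝ} (hμ : μ ∈ spectrum ℝ A) : 0 < μ := by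
  rw [hA.isHermitian.spectrum_real_eq_range_eigenvalues] at hμ
  obtain ⟨i, rfl⟩ := hμ
  exact hA.eigenvalues_pos i

theorem PosDef.sInf_spectrum_pos [Nonempty ι] (hA : A.PosDef) : 0 < sInf (spectrum ℝ A) :=
  hA.pos_of_mem_spectrum (hA.isHermitian.spectrum_real_nonempty.csInf_mem finite_real_spectrum)

theorem PosDef.sSup_spectrum_pos [Nonempty ι] (hA : A.PosDef) : 0 < sSup (spectrum ℝ A) :=
  hA.pos_of_mem_spectrum (hA.isHermitian.spectrum_real_nonempty.csSup_mem finite_real_spectrum)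

theorem inv_mem_spectrum_of_mem_spectrum_inv (hA : IsUnit A) {μ : ℝ}
    (hμ : μ ∈ spectrum ℝ A⁻¹) : μ⁻¹ ∈ spectrum ℝ A := by
  lift A to (Matrix ι ι ℝ)ˣ using hA
  rwa [← coe_units_inv, ← spectrum.map_inv] at hμ

theorem PosDef.dotProduct_inv_mulVec_le (hA : A.PosDef) (w : ι → ℝ) :
    w ⬝ᵥ A⁻¹ *ᵥ w ≤ (sInf (spectrum ℝ A))⁻¹ * (w ⬝ᵥ w) := by
  refine (hA.inv.isHermitian.forall_dotProduct_mulVec_le_iff _).2 (fun μ hμ => ?_) w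
  have hμA := inv_mem_spectrum_of_mem_spectrum_inv hA.isUnit hμ
  have hmin : sInf (spectrum ℝ A) ∈ spectrum ℝ A :=
    Set.Nonempty.csInf_mem ⟨_, hμA⟩ finite_real_spectrum
  simpa using inv_anti₀ (hA.pos_of_mem_spectrum hmin) (csInf_le finite_real_spectrum.bddBelow hμA)

theorem PosDef.inv_sSup_spectrum_mul_le_dotProduct_inv_mulVec (hA : A.PosDef) (w : ι → ℝ) :
    (sSup (spectrum ℝ A))⁻¹ * (w ⬝ᵥ w) ≤ w ⬝ᵥ A⁻¹ *ᵥ w := by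
  refine (hA.inv.isHermitian.forall_le_dotProduct_mulVec_iff _).2 (fun μ hμ => ?_) w
  have hμA := inv_mem_spectrum_of_mem_spectrum_inv hA.isUnit hμ
  simpa using inv_anti₀ (hA.pos_of_mem_spectrum hμA) (le_csSup finite_real_spectrum.bddAbove hμA)

theorem PosDef.dotProduct_inv_mulVec_le_mul [Nonempty ι] (hA : A.PosDef) (hB : B.PosDef)
    (w : ι → ℝ) :
    w ⬝ᵥ B⁻¹ *ᵥ w ≤ sSup (spectrum ℝ A) / sInf (spectrum ℝ B) * (w ⬝ᵥ A⁻¹ *ᵥ w) := by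
  have hσ := hA.sSup_spectrum_pos
  calc w ⬝ᵥ B⁻¹ *ᵥ w ≤ (sInf (spectrum ℝ B))⁻¹ * (w ⬝ᵥ w) := hB.dotProduct_inv_mulVec_le w
    _ = sSup (spectrum ℝ A) / sInf (spectrum ℝ B) * ((sSup (spectrum ℝ A))⁻¹ * (w ⬝ᵥ w)) := by
      field_simp
    _ ≤ sSup (spectrum ℝ A) / sInf (spectrum ℝ B) * (w ⬝ᵥ A⁻¹ *ᵥ w) := by
      gcongr
      · exact div_nonneg hσ.le hB.sInf_spectrum_pos.le
      · exact hA.inv_sSup_spectrum_mul_le_dotProduct_inv_mulVec w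

end Spectrum

section Gram

variable {m ι : Type*} [Fintype ι]

theorem mulVec_injective_of_rank_eq_card {K : Type*} [Field K] (M : Matrix m ι K)
    (h : M.rank = Fintype.card ι) : Function.Injective M.mulVec := by
  have hker := LinearMap.finrank_range_add_finrank_ker M.mulVecLin
  rw [← rank, h, Module.finrank_fintype_fun_eq_card, Nat.add_eq_left,
    Submodule.finrank_eq_zero] at hker
  exact LinearMap.ker_eq_bot.1 hker

variable [Fintype m]

theorem posDef_transpose_mul_self_of_rank_eq_card_s19 (M : Matrix m ι ℝ)
    (h : M.rank = Fintype.card ι) : (Mᵀ * M).PosDef := by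
  classical
  simpa using PosDef.conjTranspose_mul_self M (mulVec_injective_of_rank_eq_card M h)

theorem dotProduct_transpose_mul_self_mulVec (M : Matrix m ι ℝ) (x : ι → ℝ) :
    x ⬝ᵥ (Mᵀ * M) *ᵥ x = M *ᵥ x ⬝ᵥ M *ᵥ x := by
  rw [← mulVec_mulVec, dotProduct_mulVec, vecMul_transpose]

variable [DecidableEq ι]

theorem dotProduct_transpose_mul_self_add_smul_one_mulVec (M : Matrix m ι ℝ) (α : ℝ)
    (x : ι → ℝ) :
    x ⬝ᵥ (Mᵀ * M + α • 1) *ᵥ x = M *ᵥ x ⬝ᵥ M *ᵥ x + α * (x ⬝ᵥ x) := by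
  rw [add_mulVec, dotProduct_add, dotProduct_transpose_mul_self_mulVec, smul_mulVec, one_mulVec,
    dotProduct_smul, smul_eq_mul]

theorem posDef_transpose_mul_self_add_smul_one (M : Matrix m ι ℝ) {α : ℝ} (hα : 0 < α) :
    (Mᵀ * M + α • 1).PosDef :=
  PosDef.posSemidef_add (by simpa using posSemidef_conjTranspose_mul_self M) (PosDef.one.smul hα)

theorem dotProduct_self_mulVec_inv_le (M : Matrix m ι ℝ) {α : ℝ} (hα : 0 < α) (w : ι → ℝ) :
    M *ᵥ (Mᵀ * M + α • 1)⁻¹ *ᵥ w ⬝ᵥ M *ᵥ (Mᵀ * M + α • 1)⁻¹ *ᵥ w ≤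
      w ⬝ᵥ (Mᵀ * M + α • 1)⁻¹ *ᵥ w := by
  set y := (Mᵀ * M + α • 1)⁻¹ *ᵥ w
  have hdet := (isUnit_iff_isUnit_det _).1 (posDef_transpose_mul_self_add_smul_one M hα).isUnit
  have hy : (Mᵀ * M + α • 1) *ᵥ y = w := by
    rw [mulVec_mulVec, mul_nonsing_inv _ hdet, one_mulVec]
  rw [← hy, dotProduct_comm _ y, dotProduct_transpose_mul_self_add_smul_one_mulVec]
  nlinarith [dotProduct_self_nonneg y]

theorem le_sInf_spectrum_add_transpose_mul_self_add_smul_one [Nonempty ι] (H E : Matrix m ι ℝ)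
    {α : ℝ} (hE : ∑ j, ∑ i, E i j ^ 2 ≤ α / 2) :
    (sInf (spectrum ℝ (Hᵀ * H)) + α) / 2 ≤
      sInf (spectrum ℝ ((H + E)ᵀ * (H + E) + α • 1)) := by
  have hG : ∀ M : Matrix m ι ℝ, (Mᵀ * M).IsHermitian := fun M =>
    by simpa using isHermitian_conjTranspose_mul_self M
  refine ((hG _).add (isHermitian_one.smul (IsSelfAdjoint.all α))).le_sInf_spectrum fun x => ?_
  have hHx := (hG H).sInf_spectrum_mul_le x
  have hEx := (dotProduct_self_mulVec_le E x).trans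
    (mul_le_mul_of_nonneg_right hE (dotProduct_self_nonneg x))
  have hsum := half_dotProduct_self_sub_le (H *ᵥ x) (E *ᵥ x)
  rw [dotProduct_transpose_mul_self_mulVec] at hHx
  rw [dotProduct_transpose_mul_self_add_smul_one_mulVec, add_mulVec]
  nlinarith

theorem sSup_spectrum_div_sInf_spectrum_le_two_mul [Nonempty ι] (H E : Matrix m ι ℝ)
    (hH : (Hᵀ * H).PosDef) {α : ℝ} (hα : 0 < α) (hE : ∑ j, ∑ i, E i j ^ 2 ≤ α / 2) :
    sSup (spectrum ℝ (Hᵀ * H + α • 1)) / sInf (spectrum ℝ ((H + E)ᵀ * (H + E) + α • 1)) ≤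
      2 * (sSup (spectrum ℝ (Hᵀ * H)) / sInf (spectrum ℝ (Hᵀ * H))) := by
  have hmin := hH.sInf_spectrum_pos
  have hle : sInf (spectrum ℝ (Hᵀ * H)) ≤ sSup (spectrum ℝ (Hᵀ * H)) :=
    csInf_le_csSup hH.isHermitian.spectrum_real_nonempty finite_real_spectrum.bddBelow
      finite_real_spectrum.bddAbove
  calc _ ≤ (sSup (spectrum ℝ (Hᵀ * H)) + α) / ((sInf (spectrum ℝ (Hᵀ * H)) + α) / 2) :=
        div_le_div₀ (by linarith) (hH.isHermitian.sSup_spectrum_add_smul_one_le α) (by linarith)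
          (le_sInf_spectrum_add_transpose_mul_self_add_smul_one H E hE)
    _ = 2 * ((sSup (spectrum ℝ (Hᵀ * H)) + α) / (sInf (spectrum ℝ (Hᵀ * H)) + α)) := by
      field_simp
    _ ≤ _ := by gcongr 2 * ?_; exact add_div_add_le_div hmin hle hα.le

end Gram

end Matrix

theorem projMatReg_mulVec {n K : ℕ} (M : Matrix (Fin n) (Fin K) ℝ) (α : ℝ) (u : Fin n → ℝ) :
    projMatReg M α *ᵥ u = M *ᵥ (Mᵀ * M + α • 1)⁻¹ *ᵥ Mᵀ *ᵥ u := by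
  rw [projMatReg, ← mulVec_mulVec, ← mulVec_mulVec]

theorem projMatReg_mulVec_sub_projMatReg_add_mulVec {n K : ℕ} (H E : Matrix (Fin n) (Fin K) ℝ)
    {α : ℝ} (hα : 0 < α) (u : Fin n → ℝ) :
    let R := Hᵀ * H + α • 1
    let Rhat := (H + E)ᵀ * (H + E) + α • 1
    let Λ := R⁻¹ *ᵥ Hᵀ *ᵥ u
    projMatReg H α *ᵥ u - projMatReg (H + E) α *ᵥ u =
      -(E *ᵥ Λ) + (H + E) *ᵥ Rhat⁻¹ *ᵥ ((H + E)ᵀ * (H + E) - Hᵀ * H) *ᵥ Λ +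
        (H + E) *ᵥ Rhat⁻¹ *ᵥ (Hᵀ *ᵥ u - (H + E)ᵀ *ᵥ u) := by
  intro R Rhat Λ
  have hR := (isUnit_iff_isUnit_det _).1 (posDef_transpose_mul_self_add_smul_one H hα).isUnit
  have hRhat :=
    (isUnit_iff_isUnit_det _).1 (posDef_transpose_mul_self_add_smul_one (H + E) hα).isUnit
  have hΛ : R *ᵥ Λ = Hᵀ *ᵥ u := by rw [mulVec_mulVec, mul_nonsing_inv _ hR, one_mulVec]
  have hsplit : ((H + E)ᵀ * (H + E) - Hᵀ * H) *ᵥ Λ + (Hᵀ *ᵥ u - (H + E)ᵀ *ᵥ u) =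
      Rhat *ᵥ Λ - (H + E)ᵀ *ᵥ u := by
    rw [show (H + E)ᵀ * (H + E) - Hᵀ * H = Rhat - R by simp only [Rhat, R]; abel, sub_mulVec, hΛ]
    abel
  have hpd : projMatReg H α *ᵥ u - projMatReg (H + E) α *ᵥ u =
      H *ᵥ Λ - (H + E) *ᵥ Rhat⁻¹ *ᵥ (H + E)ᵀ *ᵥ u := by
    simp only [projMatReg_mulVec]; rfl
  rw [hpd, add_assoc, ← mulVec_add, ← mulVec_add, hsplit, mulVec_sub, mulVec_mulVec Λ Rhat⁻¹,
    nonsing_inv_mul _ hRhat, one_mulVec, mulVec_sub, add_mulVec, add_mulVec]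
  abel

theorem regularized_projection_error_decomposition_general (n K : ℕ)
    (H E : Matrix (Fin n) (Fin K) ℝ) (hH : H.rank = K)
    (α : ℝ) (hα : 0 < α)
    (hE : ∑ j, ∑ i, (E i j)^2 ≤ α / 2)
    (u : Fin n → ℝ) :
    let Hhat := H + E
    let Rα := Hᵀ * H + α • (1 : Matrix (Fin K) (Fin K) ℝ)
    let Λ := Rα⁻¹ *ᵥ (Hᵀ *ᵥ u)
    let tI := (E *ᵥ Λ) ⬝ᵥ (E *ᵥ Λ)
    let tII := ((Hhatᵀ * Hhat - Hᵀ * H) *ᵥ Λ) ⬝ᵥ ((Hhatᵀ * Hhat - Hᵀ * H) *ᵥ Λ)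
    let w3 := Hᵀ *ᵥ u - Hhatᵀ *ᵥ u
    let tIII := w3 ⬝ᵥ (Rα⁻¹ *ᵥ w3)
    let pd := projMatReg H α *ᵥ u - projMatReg Hhat α *ᵥ u
    pd ⬝ᵥ pd ≤ 16 * tI +
      (8 + 64 * condNum (Hᵀ * H)) *
        (rhoMin (Hhatᵀ * Hhat + α • (1 : Matrix (Fin K) (Fin K) ℝ)))⁻¹ * tII +
      (9 + 256 * condNum (Hᵀ * H) + 128 * (condNum (Hᵀ * H))^3) * tIII := by
  intro Hhat Rα Λ tI tII w3 tIII pd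
  rcases Nat.eq_zero_or_pos K with rfl | hK
  · simp [pd, tI, tII, tIII, w3, projMatReg_mulVec, mulVec, dotProduct]
  have : Nonempty (Fin K) := ⟨⟨0, hK⟩⟩
  set Rhat := Hhatᵀ * Hhat + α • (1 : Matrix (Fin K) (Fin K) ℝ)
  set w2 := (Hhatᵀ * Hhat - Hᵀ * H) *ᵥ Λ
  set C := condNum (Hᵀ * H)
  have hG := posDef_transpose_mul_self_of_rank_eq_card_s19 H (by simpa using hH)
  have hR := posDef_transpose_mul_self_add_smul_one H hα
  have hRhat := posDef_transpose_mul_self_add_smul_one Hhat hα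
  have hC : 0 ≤ C := div_nonneg hG.sSup_spectrum_pos.le hG.sInf_spectrum_pos.le
  have hpd : pd = -(E *ᵥ Λ) + Hhat *ᵥ Rhat⁻¹ *ᵥ w2 + Hhat *ᵥ Rhat⁻¹ *ᵥ w3 :=
    projMatReg_mulVec_sub_projMatReg_add_mulVec H E hα u
  have hII : Hhat *ᵥ Rhat⁻¹ *ᵥ w2 ⬝ᵥ Hhat *ᵥ Rhat⁻¹ *ᵥ w2 ≤ (rhoMin Rhat)⁻¹ * tII :=
    (dotProduct_self_mulVec_inv_le Hhat hα w2).trans (hRhat.dotProduct_inv_mulVec_le w2)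
  have htIII : 0 ≤ tIII := by simpa using hR.inv.posSemidef.dotProduct_mulVec_nonneg w3
  have hIII : Hhat *ᵥ Rhat⁻¹ *ᵥ w3 ⬝ᵥ Hhat *ᵥ Rhat⁻¹ *ᵥ w3 ≤ 2 * C * tIII :=
    (dotProduct_self_mulVec_inv_le Hhat hα w3).trans <|
      (hR.dotProduct_inv_mulVec_le_mul hRhat w3).trans (mul_le_mul_of_nonneg_right
        (sSup_spectrum_div_sInf_spectrum_le_two_mul H E hG hα hE) htIII)
  have htI : 0 ≤ tI := dotProduct_self_nonneg _
  have htII : 0 ≤ (rhoMin Rhat)⁻¹ * tII :=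
    mul_nonneg (inv_nonneg.2 hRhat.sInf_spectrum_pos.le) (dotProduct_self_nonneg _)
  calc pd ⬝ᵥ pd
      ≤ 3 * (tI + Hhat *ᵥ Rhat⁻¹ *ᵥ w2 ⬝ᵥ Hhat *ᵥ Rhat⁻¹ *ᵥ w2 +
          Hhat *ᵥ Rhat⁻¹ *ᵥ w3 ⬝ᵥ Hhat *ᵥ Rhat⁻¹ *ᵥ w3) := by
        rw [hpd]; simpa using dotProduct_self_add_add_le (-(E *ᵥ Λ)) _ _
    _ ≤ _ := by
        nlinarith [mul_nonneg hC htII, mul_nonneg hC htIII, mul_nonneg (pow_nonneg hC 3) htIII]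

/-- Main decomposition for the regularized projection error
(Theorem `ProjOperatorSkeletonProofRegularized` with explicit constants). -/
theorem regularized_projection_error_decomposition (n K : ℕ)
    (H E : Matrix (Fin n) (Fin K) ℝ) (hH : H.rank = K)
    (α : ℝ) (hα : 0 < α)
    (hE : ∑ j, ∑ i, (E i j)^2 ≤ α / 2)
    (u : Fin n → ℝ) (hu : u ⬝ᵥ u = 1) :
    let Hhat := H + E
    let Rα := Hᵀ * H + α • (1 : Matrix (Fin K) (Fin K) ℝ)
    let Λ := Rα⁻¹ *ᵥ (Hᵀ *ᵥ u)
    let tI := (E *ᵥ Λ) ⬝ᵥ (E *ᵥ Λ)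
    let tII := ((Hhatᵀ * Hhat - Hᵀ * H) *ᵥ Λ) ⬝ᵥ ((Hhatᵀ * Hhat - Hᵀ * H) *ᵥ Λ)
    let w3 := Hᵀ *ᵥ u - Hhatᵀ *ᵥ u
    let tIII := w3 ⬝ᵥ (Rα⁻¹ *ᵥ w3)
    let pd := projMatReg H α *ᵥ u - projMatReg Hhat α *ᵥ u
    pd ⬝ᵥ pd ≤ 16 * tI +
      (8 + 64 * condNum (Hᵀ * H)) *
        (rhoMin (Hhatᵀ * Hhat + α • (1 : Matrix (Fin K) (Fin K) ℝ)))⁻¹ * tII +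
      (9 + 256 * condNum (Hᵀ * H) + 128 * (condNum (Hᵀ * H))^3) * tIII :=
  regularized_projection_error_decomposition_general n K H E hH α hα hE u
end
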